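/- Let ε₀ > 0 be sufficiently small, let K_L be sufficiently large, let a_{i,j} be real numbers (2 ≤ i ≤ d, 0 ≤ j ≤ i) satisfying |a_{2,0}| + |a_{2,2}| + 100^d Σ_{i=3}^{d} Σ_{j=0}^{i} |a_{i,j}| ≤ ε₀, and let a ∈ [-10,10]. With F(θ) = (a_{2,0} + Σ_{i=3}^{d} a_{i,i−2} a^{i−2}) cos²θ + (1 + Σ_{i=3}^{d} (i−1) a_{i,i−1} a^{i−2}) sinθ cosθ + (a_{2,2} + Σ_{i=3}^{d} (i(i−1)/2) a_{i,i} a^{i−2}) sin²θ and c₁ = 10^{-10d} ε₀ K_L^{-1}, one has #{θ ∈ c₁ℤ ∩ [-π/4, π/4] : |F(θ)| ≤ 10^{-3d} ε₀ K_L^{-1}} ≤ 10^{8d}. -/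

import Mathlib

/-!
Write `F = A cos²θ + B sinθ cosθ + C sin²θ`; the smallness condition makes `A`, `C` and `B - 1`
of size `O(ε₀)`. Since `|θ| ≤ 2 |sinθ cosθ|` on `[-π/4, π/4]`, every `δ`-near-root of `F` there
lies within `O(ε₀)` of `0`, where `F' = B cos 2θ + (C - A) sin 2θ ≥ 1/2`. By the mean value
theorem any two near-roots are at most `4δ = 4·10^{7d} c₁` apart, so at most
`8·10^{7d} + 1 ≤ 10^{8d}` points of `c₁ℤ` are near-roots.
-/

noncomputable section

def CoeffSmall (d : ℕ) (ε₀ : ℝ) (a : ℕ → ℕ → ℝ) : Prop :=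
  |a 2 0| + |a 2 2| +
      100 ^ d * ∑ i ∈ Finset.Icc 3 d, ∑ j ∈ Finset.range (i + 1), |a i j| ≤ ε₀

/-- The coefficient of `ξ²` after translating `(0,a)` to the origin and rotating by `θ`:
`F(θ) = (a₂₀ + Σ a_{i,i-2} a^{i-2}) cos²θ + (1 + Σ (i-1)a_{i,i-1} a^{i-2}) sinθcosθ
       + (a₂₂ + Σ (i(i-1)/2) a_{i,i} a^{i-2}) sin²θ`. -/
def Fcoef (d : ℕ) (a : ℕ → ℕ → ℝ) (t θ : ℝ) : ℝ :=
  (a 2 0 + ∑ i ∈ Finset.Icc 3 d, a i (i - 2) * t ^ (i - 2)) * Real.cos θ ^ 2 +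
    (1 + ∑ i ∈ Finset.Icc 3 d, ((i : ℝ) - 1) * a i (i - 1) * t ^ (i - 2)) *
      Real.sin θ * Real.cos θ +
    (a 2 2 + ∑ i ∈ Finset.Icc 3 d, ((i : ℝ) * ((i : ℝ) - 1) / 2) * a i i * t ^ (i - 2)) *
      Real.sin θ ^ 2
/-- `c₁(K_L⁻¹) = 10^{-10d} ε₀ K_L^{-1}`. -/
def c1 (d : ℕ) (ε₀ KL : ℝ) : ℝ := ε₀ / (10 ^ (10 * d) * KL)

open Real Set

lemma abs_le_two_mul_abs_sin_mul_cos {θ : ℝ} (hθ : |θ| ≤ π / 4) :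
    |θ| ≤ 2 * |sin θ * cos θ| := by
  have h2θ : |2 * θ| ≤ π / 2 := by rw [abs_mul, abs_two]; linarith
  have hJordan := mul_abs_le_abs_sin h2θ
  rw [sin_two_mul, mul_assoc, abs_mul, abs_mul, abs_two] at hJordan
  have hπ : |θ| ≤ 2 / π * (2 * |θ|) := by
    rw [div_mul_eq_mul_div, le_div_iff₀ pi_pos]
    nlinarith [pi_le_four, abs_nonneg θ]
  linarith

lemma mul_abs_sub_le_abs_sub_of_le_deriv {f : ℝ → ℝ} {D : Set ℝ} (hD : Convex ℝ D)
    (hf : Differentiable ℝ f) {m : ℝ} (hm : ∀ x ∈ D, m ≤ deriv f x) {x y : ℝ}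
    (hx : x ∈ D) (hy : y ∈ D) : m * |x - y| ≤ |f x - f y| := by
  have hgrow := hD.mul_sub_le_image_sub_of_le_deriv hf.continuous.continuousOn
    hf.differentiableOn fun z hz => hm z (interior_subset hz)
  rcases le_total x y with hxy | hyx
  · rw [abs_sub_comm x, abs_sub_comm (f x), abs_of_nonneg (sub_nonneg.2 hxy)]
    exact (hgrow x hx y hy hxy).trans (le_abs_self _)
  · rw [abs_of_nonneg (sub_nonneg.2 hyx)]
    exact (hgrow y hy x hx hyx).trans (le_abs_self _)

def sinCosForm (A B C θ : ℝ) : ℝ := A * cos θ ^ 2 + B * sin θ * cos θ + C * sin θ ^ 2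

lemma hasDerivAt_sinCosForm (A B C θ : ℝ) :
    HasDerivAt (sinCosForm A B C) (B * cos (2 * θ) + (C - A) * sin (2 * θ)) θ := by
  have h := ((((hasDerivAt_cos θ).pow 2).const_mul A).add
    (((hasDerivAt_sin θ).const_mul B).mul (hasDerivAt_cos θ))).add
    (((hasDerivAt_sin θ).pow 2).const_mul C)
  refine HasDerivAt.congr_deriv (f := sinCosForm A B C) h ?_
  rw [cos_two_mul, sin_two_mul]
  push_cast
  linear_combination (-B) * sin_sq_add_cos_sq θ

section NearRoots

variable {A B C η δ : ℝ} (hA : |A| ≤ η) (hB : |B - 1| ≤ η) (hC : |C| ≤ η)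
  (hη : η ≤ 1 / 100)
include hA hB hC hη

lemma abs_le_of_abs_sinCosForm_le {θ : ℝ} (hθ : |θ| ≤ π / 4)
    (hf : |sinCosForm A B C θ| ≤ δ) : |θ| ≤ 4 * (δ + 2 * η) := by
  have hsc := abs_le_two_mul_abs_sin_mul_cos hθ
  have hcos : |cos θ ^ 2| ≤ 1 := by rw [abs_of_nonneg (sq_nonneg _)]; exact cos_sq_le_one θ
  have hsin : |sin θ ^ 2| ≤ 1 := by rw [abs_of_nonneg (sq_nonneg _)]; exact sin_sq_le_one θ
  have hrest : |A * cos θ ^ 2 + C * sin θ ^ 2| ≤ 2 * η :=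
    calc _ ≤ |A| * |cos θ ^ 2| + |C| * |sin θ ^ 2| := by
          rw [← abs_mul, ← abs_mul]; exact abs_add_le _ _
      _ ≤ 2 * η := by
          nlinarith [abs_nonneg A, abs_nonneg C, abs_nonneg (cos θ ^ 2), abs_nonneg (sin θ ^ 2)]
  have hmain : B * |sin θ * cos θ| ≤ δ + 2 * η := by
    have : |B * (sin θ * cos θ)| ≤ δ + 2 * η := by
      have heq : B * (sin θ * cos θ) =
          sinCosForm A B C θ - (A * cos θ ^ 2 + C * sin θ ^ 2) := by
        unfold sinCosForm; ring
      rw [heq]; exact (abs_sub _ _).trans (add_le_add hf hrest)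
    rwa [abs_mul, abs_of_nonneg (by linarith [(abs_le.1 hB).1])] at this
  nlinarith [(abs_le.1 hB).1, abs_nonneg (sin θ * cos θ)]

lemma half_le_deriv_sinCosForm {θ : ℝ} (hθ : |θ| ≤ 1 / 4) :
    1 / 2 ≤ B * cos (2 * θ) + (C - A) * sin (2 * θ) := by
  have hcos : 7 / 8 ≤ cos (2 * θ) := by
    have := one_sub_sq_div_two_le_cos (x := 2 * θ)
    nlinarith [sq_abs θ, abs_nonneg θ]
  have hsin : |(C - A) * sin (2 * θ)| ≤ 2 * η := by
    rw [abs_mul]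
    calc |C - A| * |sin (2 * θ)| ≤ 2 * η * 1 :=
          mul_le_mul (by linarith [abs_sub C A]) (abs_sin_le_one _) (abs_nonneg _)
            (by linarith [abs_nonneg A])
      _ = 2 * η := mul_one _
  have hB' := abs_le.1 hB
  have hsin' := abs_le.1 hsin
  nlinarith

lemma abs_sub_le_of_abs_sinCosForm_le (hδη : δ ≤ η) {θ₁ θ₂ : ℝ} (hθ₁ : |θ₁| ≤ π / 4)
    (hθ₂ : |θ₂| ≤ π / 4) (hf₁ : |sinCosForm A B C θ₁| ≤ δ) (hf₂ : |sinCosForm A B C θ₂| ≤ δ) :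
    |θ₁ - θ₂| ≤ 4 * δ := by
  have hsmall : ∀ θ, |θ| ≤ π / 4 → |sinCosForm A B C θ| ≤ δ → θ ∈ Icc (-(1 / 4)) (1 / 4) := by
    intro θ hθ hf
    rw [mem_Icc, ← abs_le]
    linarith [abs_le_of_abs_sinCosForm_le hA hB hC hη hθ hf]
  have hslope := mul_abs_sub_le_abs_sub_of_le_deriv (convex_Icc _ _)
    (fun θ => (hasDerivAt_sinCosForm A B C θ).differentiableAt)
    (fun θ hθ => (hasDerivAt_sinCosForm A B C θ).deriv ▸
      half_le_deriv_sinCosForm hA hB hC hη (abs_le.2 hθ))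
    (hsmall θ₁ hθ₁ hf₁) (hsmall θ₂ hθ₂ hf₂)
  linarith [abs_sub (sinCosForm A B C θ₁) (sinCosForm A B C θ₂)]

end NearRoots

lemma finite_and_ncard_le_of_forall_abs_sub_le {S : Set ℝ} {c : ℝ} (hc : 0 < c) (N : ℕ)
    (hS : ∀ x ∈ S, ∃ m : ℤ, x = m * c) (hdist : ∀ x ∈ S, ∀ y ∈ S, |x - y| ≤ N * c) :
    S.Finite ∧ S.ncard ≤ 2 * N + 1 := by
  rcases S.eq_empty_or_nonempty with rfl | ⟨x₀, hx₀⟩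
  · simp
  obtain ⟨m₀, rfl⟩ := hS x₀ hx₀
  set T : Finset ℝ := (Finset.Icc (m₀ - N) (m₀ + N)).image fun m : ℤ => m * c
  have hST : S ⊆ T := by
    intro x hx
    obtain ⟨m, rfl⟩ := hS x hx
    have hm : |((m - m₀ : ℤ) : ℝ)| * c ≤ N * c := by
      rw [← abs_of_pos hc, ← abs_mul, abs_of_pos hc]
      push_cast
      simpa [sub_mul] using hdist _ hx _ hx₀
    have hm' : |m - m₀| ≤ N := by exact_mod_cast le_of_mul_le_mul_right hm hc
    rw [abs_le] at hm'
    exact Finset.mem_coe.2 (Finset.mem_image_of_mem _ (Finset.mem_Icc.2 ⟨by omega, by omega⟩))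
  refine ⟨T.finite_toSet.subset hST, ?_⟩
  calc S.ncard ≤ (T : Set ℝ).ncard := ncard_le_ncard hST T.finite_toSet
    _ ≤ (Finset.Icc (m₀ - N) (m₀ + N)).card := by
      rw [ncard_coe_finset]; exact Finset.card_image_le
    _ = 2 * N + 1 := by rw [Int.card_Icc]; omega

lemma ten_mul_sq_le_ten_pow (n : ℕ) : 10 * n ^ 2 ≤ 10 ^ n := by
  induction n with
  | zero => norm_num
  | succ n ih =>
    rcases Nat.lt_or_ge n 3 with hn | hn
    · interval_cases n <;> norm_num
    · rw [pow_succ 10 n]; nlinarith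

lemma abs_sum_Icc_mul_pow_le_mul_sum_abs (d : ℕ) (a : ℕ → ℕ → ℝ) (w : ℕ → ℝ) (j : ℕ → ℕ)
    (hw : ∀ i ∈ Finset.Icc 3 d, |w i| ≤ d ^ 2) (hj : ∀ i ∈ Finset.Icc 3 d, j i ≤ i)
    {t : ℝ} (ht : |t| ≤ 10) :
    |∑ i ∈ Finset.Icc 3 d, w i * a i (j i) * t ^ (i - 2)| ≤
      d ^ 2 * 10 ^ d * ∑ i ∈ Finset.Icc 3 d, ∑ k ∈ Finset.range (i + 1), |a i k| := by
  rw [Finset.mul_sum]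
  refine (Finset.abs_sum_le_sum_abs _ _).trans (Finset.sum_le_sum fun i hi => ?_)
  have hai : |a i (j i)| ≤ ∑ k ∈ Finset.range (i + 1), |a i k| :=
    Finset.single_le_sum (f := fun k => |a i k|) (fun k _ => abs_nonneg _)
      (Finset.mem_range.2 (Nat.lt_succ_of_le (hj i hi)))
  have hti : |t| ^ (i - 2) ≤ 10 ^ d :=
    (pow_le_pow_left₀ (abs_nonneg t) ht _).trans
      (pow_le_pow_right₀ (by norm_num) ((Nat.sub_le i 2).trans (Finset.mem_Icc.1 hi).2))
  rw [abs_mul, abs_mul, abs_pow]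
  calc |w i| * |a i (j i)| * |t| ^ (i - 2)
      ≤ d ^ 2 * (∑ k ∈ Finset.range (i + 1), |a i k|) * 10 ^ d := by gcongr; exact hw i hi
    _ = d ^ 2 * 10 ^ d * ∑ k ∈ Finset.range (i + 1), |a i k| := by ring

namespace CoeffSmall

variable {d : ℕ} {ε₀ : ℝ} {a : ℕ → ℕ → ℝ} (ha : CoeffSmall d ε₀ a)
include ha

lemma abs_sum_Icc_mul_pow_le (w : ℕ → ℝ) (j : ℕ → ℕ)
    (hw : ∀ i ∈ Finset.Icc 3 d, |w i| ≤ d ^ 2) (hj : ∀ i ∈ Finset.Icc 3 d, j i ≤ i)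
    {t : ℝ} (ht : |t| ≤ 10) :
    |∑ i ∈ Finset.Icc 3 d, w i * a i (j i) * t ^ (i - 2)| ≤ ε₀ / 10 := by
  set S := ∑ i ∈ Finset.Icc 3 d, ∑ k ∈ Finset.range (i + 1), |a i k|
  have hSε : 100 ^ d * S ≤ ε₀ := by
    unfold CoeffSmall at ha; linarith [abs_nonneg (a 2 0), abs_nonneg (a 2 2)]
  have hd : (10 : ℝ) * d ^ 2 ≤ 10 ^ d := by exact_mod_cast ten_mul_sq_le_ten_pow d
  have h100 : (100 : ℝ) ^ d = 10 ^ d * 10 ^ d := by rw [← mul_pow]; norm_num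
  calc _ ≤ d ^ 2 * 10 ^ d * S := abs_sum_Icc_mul_pow_le_mul_sum_abs d a w j hw hj ht
    _ = 10 * d ^ 2 * (10 ^ d * S) / 10 := by ring
    _ ≤ 10 ^ d * (10 ^ d * S) / 10 := by gcongr
    _ ≤ ε₀ / 10 := by rw [← mul_assoc, ← h100]; gcongr

lemma abs_add_abs_le : |a 2 0| + |a 2 2| ≤ ε₀ := by
  have hS : 0 ≤ ∑ i ∈ Finset.Icc 3 d, ∑ k ∈ Finset.range (i + 1), |a i k| :=
    Finset.sum_nonneg fun i _ => Finset.sum_nonneg fun k _ => abs_nonneg _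
  unfold CoeffSmall at ha
  nlinarith [pow_pos (show (0 : ℝ) < 100 by norm_num) d]

lemma exists_fcoef_eq_sinCosForm {t : ℝ} (ht : |t| ≤ 10) :
    ∃ A B C, Fcoef d a t = sinCosForm A B C ∧
      |A| ≤ 2 * ε₀ ∧ |B - 1| ≤ 2 * ε₀ ∧ |C| ≤ 2 * ε₀ := by
  have hIcc : ∀ i ∈ Finset.Icc 3 d, 3 ≤ (i : ℝ) ∧ (i : ℝ) ≤ d := fun i hi =>
    ⟨by exact_mod_cast (Finset.mem_Icc.1 hi).1, by exact_mod_cast (Finset.mem_Icc.1 hi).2⟩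
  have hA : |∑ i ∈ Finset.Icc 3 d, a i (i - 2) * t ^ (i - 2)| ≤ ε₀ / 10 := by
    simpa using ha.abs_sum_Icc_mul_pow_le (fun _ => 1) (fun i => i - 2)
      (fun i hi => by have := hIcc i hi; rw [abs_one]; nlinarith) (fun i _ => Nat.sub_le i 2) ht
  have hB := ha.abs_sum_Icc_mul_pow_le (fun i => (i : ℝ) - 1) (fun i => i - 1)
    (fun i hi => by have := hIcc i hi; rw [abs_of_nonneg (by linarith)]; nlinarith)
    (fun i _ => Nat.sub_le i 1) ht
  have hC := ha.abs_sum_Icc_mul_pow_le (fun i => (i : ℝ) * ((i : ℝ) - 1) / 2) (fun i => i)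
    (fun i hi => by have := hIcc i hi; rw [abs_of_nonneg (by nlinarith)]; nlinarith)
    (fun i _ => le_rfl) ht
  have h22 := ha.abs_add_abs_le
  refine ⟨_, _, _, rfl, ?_, ?_, ?_⟩
  all_goals have := abs_nonneg (a 2 0); have := abs_nonneg (a 2 2)
  · exact (abs_add_le _ _).trans (by linarith)
  · rw [add_sub_cancel_left]; linarith
  · exact (abs_add_le _ _).trans (by linarith)

end CoeffSmall

lemma two_mul_four_mul_ten_pow_add_one_le {d : ℕ} (hd : 3 ≤ d) :
    2 * (4 * 10 ^ (7 * d)) + 1 ≤ 10 ^ (8 * d) := by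
  have h1000 : 10 ^ 3 ≤ 10 ^ d := Nat.pow_le_pow_right (by norm_num) hd
  rw [show 8 * d = 7 * d + d by ring, pow_add]
  nlinarith [Nat.one_le_pow (7 * d) 10 (by norm_num)]

theorem statement5 (d : ℕ) (hd : 3 ≤ d) :
    ∃ ε₀' > (0 : ℝ), ∀ ε₀ : ℝ, 0 < ε₀ → ε₀ ≤ ε₀' →
      ∃ K₀ : ℝ, ∀ KL : ℝ, K₀ ≤ KL →
        ∀ a : ℕ → ℕ → ℝ, CoeffSmall d ε₀ a →
          ∀ t : ℝ, |t| ≤ 10 →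
            {θ : ℝ | (∃ m : ℤ, θ = (m : ℝ) * c1 d ε₀ KL) ∧ |θ| ≤ Real.pi / 4 ∧
                |Fcoef d a t θ| ≤ ε₀ / (10 ^ (3 * d) * KL)}.Finite ∧
            {θ : ℝ | (∃ m : ℤ, θ = (m : ℝ) * c1 d ε₀ KL) ∧ |θ| ≤ Real.pi / 4 ∧
                |Fcoef d a t θ| ≤ ε₀ / (10 ^ (3 * d) * KL)}.ncard ≤ 10 ^ (8 * d) := by
  refine ⟨1 / 1000, by norm_num, fun ε₀ hε₀ hε₀' => ⟨1, fun KL hKL a ha t ht => ?_⟩⟩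
  obtain ⟨A, B, C, hF, hA, hB, hC⟩ := ha.exists_fcoef_eq_sinCosForm ht
  have hδ : ε₀ / (10 ^ (3 * d) * KL) ≤ 2 * ε₀ := by
    have : (1 : ℝ) ≤ 10 ^ (3 * d) * KL :=
      one_le_mul_of_one_le_of_one_le (one_le_pow₀ (by norm_num)) hKL
    exact (div_le_self hε₀.le this).trans (by linarith)
  have hc : 0 < c1 d ε₀ KL := by unfold c1; positivity
  have hδc : 4 * (ε₀ / (10 ^ (3 * d) * KL)) = ((4 * 10 ^ (7 * d) : ℕ) : ℝ) * c1 d ε₀ KL := by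
    unfold c1
    rw [show 10 * d = 3 * d + 7 * d by ring, pow_add]
    push_cast
    field_simp
  refine And.imp_right (fun h => h.trans (two_mul_four_mul_ten_pow_add_one_le hd))
    (finite_and_ncard_le_of_forall_abs_sub_le hc _ (fun θ hθ => hθ.1) ?_)
  rintro θ₁ ⟨-, hθ₁, hF₁⟩ θ₂ ⟨-, hθ₂, hF₂⟩
  rw [hF] at hF₁ hF₂
  exact hδc ▸ abs_sub_le_of_abs_sinCosForm_le hA hB hC (by linarith) hδ hθ₁ hθ₂ hF₁ hF₂
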